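/- arXiv:2309.00487 — 2 statements merged into one kernel-verified Lean document; each statement's English description precedes it below -/
import Mathlib

section
/- Define s(n) = Σ_{i=0}^{n−1} Σ_{j=0}^{n−1} Δ(n)_i^j, where Δ(n)_i^j are the (n−1)×(n−1) minors of the binomial matrix M(n). Then s(n) = s(n−1) + 4^{n−1} for all n ≥ 2. -/
/-!
By Vandermonde's identity `M(n) = L Lᵀ`, where `L` is the lower unitriangular Pascal matrix
`L u k = C(u, k)`. Its inverse, hence its adjugate, is the signed Pascal matrix
`(-1)^(k+v) C(k, v)`, read off from `X^u = ((X - 1) + 1)^u`. Thus `adj M = adj Lᵀ · adj L`, and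
the cofactor signs cancel those of the signed Pascal matrix:
`Δ(n)_i^j = ∑_{k<n} C(k, i) C(k, j)`. Summing over `i, j` gives `s(n) = ∑_{k<n} 4^k`.
-/

/-- The binomial matrix with entry `(u+v).choose u`. -/
def M (n : ℕ) : Matrix (Fin n) (Fin n) ℤ :=
  Matrix.of fun u v => (((u : ℕ) + (v : ℕ)).choose (u : ℕ) : ℤ)

open Matrix Finset Polynomial

theorem Fin.sum_univ_choose_mul_eq_sum_range {R : Type*} [Semiring R] {n : ℕ} (u : Fin n)
    (f : ℕ → R) :
    ∑ k : Fin n, ((u : ℕ).choose k : R) * f k =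
      ∑ k ∈ range (u + 1), ((u : ℕ).choose k : R) * f k := by
  rw [Fin.sum_univ_eq_sum_range (fun k => ((u : ℕ).choose k : R) * f k)]
  refine (sum_subset (range_subset_range.2 u.isLt) fun k _ hk => ?_).symm
  rw [Nat.choose_eq_zero_of_lt (by simpa using hk), Nat.cast_zero, zero_mul]

theorem Nat.add_choose_eq_sum_choose_mul_choose (u v : ℕ) :
    (u + v).choose u = ∑ k ∈ range (u + 1), u.choose k * v.choose k := by
  rw [add_choose_eq, Nat.sum_antidiagonal_eq_sum_range_succ_mk, ← sum_range_reflect]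
  refine sum_congr rfl fun k hk => ?_
  have hk : k ≤ u := Nat.lt_succ_iff.mp (mem_range.mp hk)
  simp only [Nat.succ_sub_one, Nat.sub_sub_self hk, Nat.choose_symm hk]

theorem Polynomial.coeff_X_sub_one_pow {R : Type*} [Ring R] (k v : ℕ) :
    ((X - 1 : R[X]) ^ k).coeff v = (-1) ^ (k + v) * (k.choose v : R) := by
  rw [← C_1, sub_eq_add_neg, ← C_neg, coeff_X_add_C_pow]
  rcases le_or_gt v k with h | h
  · obtain ⟨d, rfl⟩ := Nat.exists_eq_add_of_le h
    rw [add_tsub_cancel_left, add_comm v d, add_assoc, pow_add, ← two_mul, pow_mul, neg_one_sq,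
      one_pow, mul_one]
  · simp [Nat.choose_eq_zero_of_lt h]

def pascal (R : Type*) [Semiring R] (n : ℕ) : Matrix (Fin n) (Fin n) R :=
  Matrix.of fun u k => ((u : ℕ).choose k : R)

def signedPascal (R : Type*) [Ring R] (n : ℕ) : Matrix (Fin n) (Fin n) R :=
  Matrix.of fun k v => (-1) ^ ((k : ℕ) + v) * ((k : ℕ).choose v : R)

theorem sum_pascal_row (R : Type*) [Semiring R] {n : ℕ} (k : Fin n) :
    ∑ i, pascal R n k i = 2 ^ (k : ℕ) := by
  simpa [pascal, ← Nat.cast_sum, Nat.sum_range_choose] using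
    Fin.sum_univ_choose_mul_eq_sum_range (R := R) k 1

section Pascal

variable (R : Type*) [CommRing R]

theorem pascal_mul_signedPascal (n : ℕ) : pascal R n * signedPascal R n = 1 := by
  ext u v
  simp only [mul_apply, pascal, signedPascal, of_apply, ← coeff_X_sub_one_pow]
  rw [Fin.sum_univ_choose_mul_eq_sum_range u fun k => ((X - 1 : R[X]) ^ k).coeff v]
  have binomial :
      ∑ k ∈ range (u + 1), ((u : ℕ).choose k : R[X]) * (X - 1) ^ k = X ^ (u : ℕ) := by
    have := add_pow (X - 1 : R[X]) 1 u
    rw [sub_add_cancel] at this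
    simpa [mul_comm] using this.symm
  simp_rw [← coeff_natCast_mul, ← finsetSum_coeff, binomial, coeff_X_pow, one_apply,
    Fin.ext_iff, eq_comm]

theorem det_pascal (n : ℕ) : (pascal R n).det = 1 := by
  rw [det_of_isLowerTriangular _ fun u k (h : u < k) => by
    simp [pascal, Nat.choose_eq_zero_of_lt h]]
  simp [pascal]

theorem adjugate_pascal (n : ℕ) : (pascal R n).adjugate = signedPascal R n := by
  rw [← inv_eq_right_inv (pascal_mul_signedPascal R n), Matrix.inv_def, det_pascal,
    Ring.inverse_one, one_smul]

theorem neg_one_pow_mul_signedPascal_mul_signedPascal {n : ℕ} (i j k : Fin n) :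
    (-1) ^ ((i : ℕ) + j) * (signedPascal R n k j * signedPascal R n k i) =
      pascal R n k i * pascal R n k j := by
  simp only [signedPascal, pascal, of_apply]
  have hsign :
      (-1 : R) ^ ((i : ℕ) + j) * (-1) ^ ((k : ℕ) + j) * (-1) ^ ((k : ℕ) + i) = 1 := by
    rw [← pow_add, ← pow_add]
    exact Even.neg_one_pow ⟨i + j + k, by ring⟩
  linear_combination ((k : ℕ).choose i * (k : ℕ).choose j : R) * hsign

end Pascal

theorem sum_det_submatrix_succAbove_eq_sum_adjugate {R : Type*} [CommRing R] {n : ℕ}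
    (A : Matrix (Fin (n + 1)) (Fin (n + 1)) R) :
    ∑ i : Fin (n + 1), ∑ j : Fin (n + 1), (A.submatrix i.succAbove j.succAbove).det =
      ∑ i : Fin (n + 1), ∑ j : Fin (n + 1), (-1) ^ ((i : ℕ) + j) * A.adjugate j i := by
  simp only [adjugate_fin_succ_eq_det_submatrix, ← mul_assoc, ← mul_pow, neg_one_mul, neg_neg,
    one_pow, one_mul]

theorem M_eq_pascal_mul_transpose (n : ℕ) : M n = pascal ℤ n * (pascal ℤ n)ᵀ := by
  ext u v
  simp only [M, pascal, mul_apply, transpose_apply, of_apply]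
  rw [Fin.sum_univ_choose_mul_eq_sum_range u fun k => ((v : ℕ).choose k : ℤ)]
  exact_mod_cast Nat.add_choose_eq_sum_choose_mul_choose u v

theorem adjugate_M (n : ℕ) : (M n).adjugate = (signedPascal ℤ n)ᵀ * signedPascal ℤ n := by
  rw [M_eq_pascal_mul_transpose, adjugate_mul_distrib, ← adjugate_transpose, adjugate_pascal]

theorem sum_det_submatrix_M_eq_sum_four_pow (n : ℕ) :
    ∑ i : Fin (n + 1), ∑ j : Fin (n + 1), ((M (n + 1)).submatrix i.succAbove j.succAbove).det =
      ∑ k : Fin (n + 1), 4 ^ (k : ℕ) := by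
  simp only [sum_det_submatrix_succAbove_eq_sum_adjugate, adjugate_M, mul_apply, transpose_apply,
    mul_sum, neg_one_pow_mul_signedPascal_mul_signedPascal]
  rw [sum_comm_cycle]
  simp only [← sum_mul_sum, sum_pascal_row, ← mul_pow]
  norm_num

/-- The paper's `n` is `n + 2` here. -/
theorem minor_sum_step (n : ℕ) :
    (∑ i : Fin (n + 2), ∑ j : Fin (n + 2),
        ((M (n + 2)).submatrix i.succAbove j.succAbove).det) =
      (∑ i : Fin (n + 1), ∑ j : Fin (n + 1),
          ((M (n + 1)).submatrix i.succAbove j.succAbove).det) + 4 ^ (n + 1) := by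
  rw [sum_det_submatrix_M_eq_sum_four_pow (n + 1), sum_det_submatrix_M_eq_sum_four_pow n,
    Fin.sum_univ_castSucc]
  simp only [Fin.val_castSucc, Fin.val_last]
end

section
/- The generating function identity Σ_{u≥0} Σ_{v≥0} s(u,v) x^u y^v = y/((1−x−y)(1−2y)) holds as formal power series, where s(u,v) = Σ_{i≥0} Σ_{k>i} binomial(u,i)·binomial(v,k). -/
/-!
Pascal's rule in `k` gives `s(u, v + 1) = 2 s(u, v) + ∑ᵢ C(u, i) C(v, i)`, and the last sum is
`C(u + v, u)` by Vandermonde. Hence `(1 - 2y) S = y G` with `G = ∑ C(u + v, u) xᵘ yᵛ`, and Pascal's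
rule once more gives `(1 - x - y) G = 1`.
-/

open MvPowerSeries Finset

theorem sum_range_choose_mul_choose (u v : ℕ) :
    ∑ i ∈ range (u + 1), u.choose i * v.choose i = (u + v).choose u := by
  rw [add_comm u v, Nat.add_choose_eq, Nat.sum_antidiagonal_eq_sum_range_succ_mk]
  refine sum_congr rfl fun i hi => ?_
  rw [Nat.choose_symm (mem_range_succ_iff.mp hi), mul_comm]

theorem sum_Ico_choose_succ (v i : ℕ) :
    ∑ k ∈ Ico (i + 1) (v + 2), (v + 1).choose k =
      v.choose i + 2 * ∑ k ∈ Ico (i + 1) (v + 1), v.choose k := by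
  rcases lt_or_ge v i with hvi | hiv
  · rw [Ico_eq_empty_of_le (by omega), Ico_eq_empty_of_le (by omega),
      Nat.choose_eq_zero_of_lt hvi]
    simp
  · have pascal : ∑ k ∈ Ico (i + 1) (v + 2), (v + 1).choose k =
        ∑ j ∈ Ico i (v + 1), (v.choose j + v.choose (j + 1)) := by
      simp only [← sum_Ico_add' (fun k => (v + 1).choose k) i (v + 1) 1, Nat.choose_succ_succ']
    rw [pascal, sum_add_distrib, sum_eq_sum_Ico_succ_bot (show i < v + 1 by omega),
      sum_Ico_add' (fun k => v.choose k) i (v + 1) 1,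
      sum_Ico_succ_top (show i + 1 ≤ v + 1 by omega), Nat.choose_succ_self]
    ring

/-- The paper's `s(u, v)`. -/
def binomialPairSum (u v : ℕ) : ℕ :=
  ∑ i ∈ range (u + 1), ∑ k ∈ Ico (i + 1) (v + 1), u.choose i * v.choose k

theorem binomialPairSum_zero_right (u : ℕ) : binomialPairSum u 0 = 0 := by
  simp [binomialPairSum]

theorem binomialPairSum_succ_right (u v : ℕ) :
    binomialPairSum u (v + 1) = 2 * binomialPairSum u v + (u + v).choose u := by
  simp only [binomialPairSum, ← mul_sum, sum_Ico_choose_succ, mul_add, sum_add_distrib,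
    sum_range_choose_mul_choose, mul_left_comm _ 2]
  ring

section

open Finsupp

theorem Finsupp.single_zero_add_single_one_eq {M : Type*} [AddZeroClass M] (m : Fin 2 →₀ M) :
    single 0 (m 0) + single 1 (m 1) = m := by
  ext i
  fin_cases i <;> simp

variable {R : Type*}

namespace MvPowerSeries

theorem ext_fin_two [Semiring R] {φ ψ : MvPowerSeries (Fin 2) R}
    (h : ∀ u v, coeff (single 0 u + single 1 v) φ = coeff (single 0 u + single 1 v) ψ) :
    φ = ψ := by
  ext m
  simpa only [single_zero_add_single_one_eq] using h (m 0) (m 1)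

variable [Semiring R] (φ : MvPowerSeries (Fin 2) R) (u v : ℕ)

theorem coeff_succ_X_zero_mul :
    coeff (single 0 (u + 1) + single 1 v) (X 0 * φ) = coeff (single 0 u + single 1 v) φ := by
  rw [X_def, single_add, add_right_comm, add_comm, coeff_add_monomial_mul, one_mul]

theorem coeff_zero_X_zero_mul :
    coeff (single 0 0 + single 1 v) (X 0 * φ) = 0 := by
  rw [X_def, coeff_monomial_mul, if_neg]
  simp [Finsupp.le_def, Fin.forall_fin_two]

theorem coeff_succ_X_one_mul :
    coeff (single 0 u + single 1 (v + 1)) (X 1 * φ) = coeff (single 0 u + single 1 v) φ := by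
  rw [X_def, single_add, ← add_assoc, add_comm, coeff_add_monomial_mul, one_mul]

theorem coeff_zero_X_one_mul :
    coeff (single 0 u + single 1 0) (X 1 * φ) = 0 := by
  rw [X_def, coeff_monomial_mul, if_neg]
  simp [Finsupp.le_def, Fin.forall_fin_two]

end MvPowerSeries

variable (R) in
def pascalSeries [Semiring R] : MvPowerSeries (Fin 2) R :=
  fun m => ((m 0 + m 1).choose (m 0) : R)

theorem coeff_pascalSeries [Semiring R] (u v : ℕ) :
    coeff (single 0 u + single 1 v) (pascalSeries R) = ((u + v).choose u : R) := by
  simp [pascalSeries, coeff_apply]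

theorem one_sub_X_sub_X_mul_pascalSeries [Ring R] :
    (1 - X 0 - X 1) * pascalSeries R = 1 := by
  refine ext_fin_two fun u v => ?_
  simp only [sub_mul, one_mul, map_sub]
  rcases u with _ | u <;> rcases v with _ | v
  · rw [coeff_zero_X_zero_mul, coeff_zero_X_one_mul, coeff_pascalSeries]
    simp [coeff_one]
  · rw [coeff_zero_X_zero_mul, coeff_succ_X_one_mul, coeff_pascalSeries, coeff_pascalSeries]
    simp [coeff_one]
  · rw [coeff_succ_X_zero_mul, coeff_zero_X_one_mul, coeff_pascalSeries, coeff_pascalSeries]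
    simp [coeff_one]
  · rw [coeff_succ_X_zero_mul, coeff_succ_X_one_mul, coeff_pascalSeries, coeff_pascalSeries,
      coeff_pascalSeries, show u + 1 + (v + 1) = u + v + 1 + 1 by omega, Nat.choose_succ_succ,
      show u + (v + 1) = u + v + 1 by omega, show u + 1 + v = u + v + 1 by omega]
    simp [coeff_one]

theorem one_sub_two_X_mul_eq_X_mul_pascalSeries [Ring R] {S : MvPowerSeries (Fin 2) R}
    (hS : ∀ u v, coeff (single 0 u + single 1 v) S = (binomialPairSum u v : R)) :
    (1 - 2 * X 1) * S = X 1 * pascalSeries R := by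
  refine ext_fin_two fun u v => ?_
  simp only [sub_mul, one_mul, two_mul, add_mul, map_sub, map_add]
  rcases v with _ | v
  · rw [coeff_zero_X_one_mul, coeff_zero_X_one_mul, hS, binomialPairSum_zero_right]
    simp
  · rw [coeff_succ_X_one_mul, coeff_succ_X_one_mul, coeff_pascalSeries, hS, hS,
      binomialPairSum_succ_right]
    push_cast
    rw [two_mul, add_sub_cancel_left]

end

/-- The generating function identity
`∑_{u,v} s(u,v) x^u y^v = y / ((1-x-y)(1-2y))` as formal power series, where
`s(u,v) = ∑_{i ≥ 0} ∑_{k > i} u.choose i * v.choose k`, stated in the form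
`(1 - x - y) * (1 - 2y) * S = y`. -/
theorem generating_function_identity (S : MvPowerSeries (Fin 2) ℚ)
    (hS : ∀ u v : ℕ,
      MvPowerSeries.coeff (Finsupp.single (0 : Fin 2) u + Finsupp.single (1 : Fin 2) v) S =
        ∑ i ∈ Finset.range (u + 1), ∑ k ∈ Finset.Ico (i + 1) (v + 1),
          (u.choose i * v.choose k : ℚ)) :
    (1 - MvPowerSeries.X (0 : Fin 2) - MvPowerSeries.X (1 : Fin 2)) *
        (1 - 2 * MvPowerSeries.X (1 : Fin 2)) * S =
      MvPowerSeries.X (1 : Fin 2) := by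
  have hS' : ∀ u v, coeff (Finsupp.single 0 u + Finsupp.single 1 v) S = binomialPairSum u v := by
    intro u v
    rw [hS]
    simp [binomialPairSum]
  calc (1 - X 0 - X 1) * (1 - 2 * X 1) * S
      = (1 - X 0 - X 1) * (X 1 * pascalSeries ℚ) := by
        rw [mul_assoc, one_sub_two_X_mul_eq_X_mul_pascalSeries hS']
    _ = X 1 * ((1 - X 0 - X 1) * pascalSeries ℚ) := mul_left_comm _ _ _
    _ = X 1 := by rw [one_sub_X_sub_X_mul_pascalSeries, mul_one]
end
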